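/- Let T have the wandering subspace property and set M := closed span of ⋃_{w ∈ bpe(T)} E_w*(ker T*). Then the orthogonal complement M⊥ is invariant under T. -/

import Mathlib

/-!
Evaluation at a bounded point evaluation `w` turns `T` into multiplication by `w`: on the dense
span of the `Tⁿ(ker T*)` one has `E_w T = w E_w`, hence everywhere by continuity. Taking adjoints,
`T* E_w* = w̄ E_w*`, so every `E_w*(ker T*)` is `T*`-invariant, and so are their span and its
closure `M`. The orthogonal complement of a `T*`-invariant subspace is `T`-invariant.
-/

open ContinuousLinearMap Submodule Filter

noncomputable section

variable {H : Type*} [NormedAddCommGroup H] [InnerProductSpace ℂ H] [CompleteSpace H]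

/-- The wandering subspace `ker T*`. -/
def kerAdj (T : H →L[ℂ] H) : Submodule ℂ H := LinearMap.ker (ContinuousLinearMap.adjoint T : H →ₗ[ℂ] H)

/-- `T` has the wandering subspace property: the closed linear span of
`⋃ₙ Tⁿ(ker T*)` is all of `H`. -/
def WSP (T : H →L[ℂ] H) : Prop :=
  (⨆ n : ℕ, (kerAdj T).map ((T ^ n : H →L[ℂ] H) : H →ₗ[ℂ] H)).topologicalClosure = ⊤

/-- `w` is a bounded point evaluation for `T`: `‖p(w)‖ ≤ c ‖p(T)‖` for all
`ker T*`-valued polynomials `p`, where `p(T) = Σ Tⁿ xₙ` for `p(z) = Σ xₙ zⁿ`. -/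
def IsBPE (T : H →L[ℂ] H) (w : ℂ) : Prop :=
  ∃ c > (0 : ℝ), ∀ (k : ℕ) (x : ℕ → H), (∀ n, x n ∈ kerAdj T) →
    ‖∑ n ∈ Finset.range (k + 1), w ^ n • x n‖ ≤
      c * ‖∑ n ∈ Finset.range (k + 1), (T ^ n) (x n)‖

/-- `E` is the (continuous extension of the) evaluation operator at `w`:
it takes values in `ker T*` and sends `p(T)` to `p(w)`. -/
def IsEval (T : H →L[ℂ] H) (w : ℂ) (E : H →L[ℂ] H) : Prop :=
  (∀ y, E y ∈ kerAdj T) ∧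
    ∀ (k : ℕ) (x : ℕ → H), (∀ n, x n ∈ kerAdj T) →
      E (∑ n ∈ Finset.range (k + 1), (T ^ n) (x n)) =
        ∑ n ∈ Finset.range (k + 1), w ^ n • x n

open Module.End
open scoped InnerProduct ComplexConjugate

lemma Module.End.iSup_mem_invtSubmodule {R M : Type*} {ι : Sort*} [Semiring R] [AddCommMonoid M]
    [Module R M] {f : Module.End R M} {p : ι → Submodule R M}
    (hp : ∀ i, p i ∈ f.invtSubmodule) : (⨆ i, p i) ∈ f.invtSubmodule := by
  rw [mem_invtSubmodule_iff_map_le, Submodule.map_iSup]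
  exact iSup_mono fun i => (mem_invtSubmodule_iff_map_le f).1 (hp i)

lemma ContinuousLinearMap.adjoint_comp_adjoint_eq_smul {𝕜 E F : Type*} [RCLike 𝕜]
    [NormedAddCommGroup E] [NormedAddCommGroup F] [InnerProductSpace 𝕜 E]
    [InnerProductSpace 𝕜 F] [CompleteSpace E] [CompleteSpace F]
    {A : E →L[𝕜] F} {S : E →L[𝕜] E} {c : 𝕜} (h : A ∘L S = c • A) :
    S† ∘L A† = conj c • A† := by
  rw [← adjoint_comp, h, map_smulₛₗ]

namespace IsEval

variable {T Ew : H →L[ℂ] H} {w : ℂ}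

lemma apply_pow_apply (hEw : IsEval T w Ew) {u : H} (hu : u ∈ kerAdj T) (n : ℕ) :
    Ew ((T ^ n) u) = w ^ n • u := by
  have h := hEw.2 n (Pi.single n u) fun m => by
    by_cases hmn : m = n <;> simp [hmn, hu]
  rw [Finset.sum_eq_single_of_mem n (by simp) fun m _ hm => by simp [hm],
    Finset.sum_eq_single_of_mem n (by simp) fun m _ hm => by simp [hm]] at h
  simpa using h

lemma comp_eq_smul (hT : WSP T) (hEw : IsEval T w Ew) : Ew ∘L T = w • Ew := by
  have hdense : Dense (↑(⨆ n : ℕ, (kerAdj T).map ((T ^ n : H →L[ℂ] H) : H →ₗ[ℂ] H)) : Set H) :=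
    Submodule.dense_iff_topologicalClosure_eq_top.mpr hT
  refine DFunLike.coe_injective <|
    Continuous.ext_on hdense (Ew ∘L T).continuous (w • Ew).continuous fun x hx => ?_
  induction hx using Submodule.iSup_induction' with
  | mem n x hx =>
      obtain ⟨u, hu, rfl⟩ := hx
      have hpow : T ((T ^ n) u) = (T ^ (n + 1)) u := by rw [pow_succ']; rfl
      change Ew (T ((T ^ n) u)) = w • Ew ((T ^ n) u)
      rw [hpow, hEw.apply_pow_apply hu, hEw.apply_pow_apply hu, pow_succ', mul_smul]
  | zero => simp
  | add x _ y _ hx hy => simp_all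

lemma map_adjoint_mem_invtSubmodule (hT : WSP T) (hEw : IsEval T w Ew) :
    (kerAdj T).map (Ew† : H →ₗ[ℂ] H) ∈ invtSubmodule (T† : H →ₗ[ℂ] H) := by
  rw [mem_invtSubmodule_iff_forall_mem_of_mem]
  rintro _ ⟨u, hu, rfl⟩
  have h := congr($(adjoint_comp_adjoint_eq_smul (hEw.comp_eq_smul hT)) u)
  refine ⟨conj w • u, Submodule.smul_mem _ _ hu, ?_⟩
  simpa using h.symm

end IsEval

theorem stmt_14_general (T : H →L[ℂ] H) (hT : WSP T)
    (E : ℂ → (H →L[ℂ] H)) (hE : ∀ w : ℂ, IsBPE T w → IsEval T w (E w))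
    (M : Submodule ℂ H)
    (hM : M = (⨆ w ∈ {w : ℂ | IsBPE T w},
      (kerAdj T).map (ContinuousLinearMap.adjoint (E w) : H →ₗ[ℂ] H)).topologicalClosure) :
    ∀ x ∈ Mᗮ, T x ∈ Mᗮ := by
  have hM_inv : M ∈ invtSubmodule (T† : H →ₗ[ℂ] H) := by
    rw [hM]
    exact Submodule.topologicalClosure_mem_invtSubmodule <|
      iSup_mem_invtSubmodule fun w => iSup_mem_invtSubmodule fun hw =>
        (hE w hw).map_adjoint_mem_invtSubmodule hT
  exact fun x hx => orthogonal_mem_invtSubmodule hM_inv hx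

/-- `M⊥` is invariant under `T`, where `M` is the closed span of
`⋃_{w ∈ bpe(T)} E_w*(ker T*)`. -/
theorem stmt_14 [TopologicalSpace.SeparableSpace H] (T : H →L[ℂ] H) (hT : WSP T)
    (E : ℂ → (H →L[ℂ] H)) (hE : ∀ w : ℂ, IsBPE T w → IsEval T w (E w))
    (M : Submodule ℂ H)
    (hM : M = (⨆ w ∈ {w : ℂ | IsBPE T w},
      (kerAdj T).map (ContinuousLinearMap.adjoint (E w) : H →ₗ[ℂ] H)).topologicalClosure) :
    ∀ x ∈ Mᗮ, T x ∈ Mᗮ :=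
  stmt_14_general T hT E hE M hM
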